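/- Let v = (v_1,…,v_m) be a linearly independent m-tuple of vectors of R^n with 1 ≤ m ≤ n, and set Θ(v) = ‖v_1∧⋯∧v_m‖/(‖v_1‖⋯‖v_m‖). Let 0 ≤ δ < Θ(v)/(2m), and let x = (x_1,…,x_m) be an m-tuple of nonzero vectors of R^n with dist(x_j, v_j) ≤ δ for each j. Then x is linearly independent over R and |Θ(x) − Θ(v)| ≤ 2mδ. -/

import Mathlib

open scoped BigOperators

noncomputable def projDist {n : ℕ} (x y : EuclideanSpace ℝ (Fin n)) : ℝ :=
  Real.sqrt (‖x‖^2 * ‖y‖^2 - (inner ℝ x y : ℝ)^2) / (‖x‖ * ‖y‖)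

noncomputable def distToSub {n : ℕ} (x : EuclideanSpace ℝ (Fin n))
    (V : Submodule ℝ (EuclideanSpace ℝ (Fin n))) : ℝ :=
  ‖(Submodule.orthogonalProjectionOnto Vᗮ x : EuclideanSpace ℝ (Fin n))‖ / ‖x‖

noncomputable def subDist {n : ℕ} (W V : Submodule ℝ (EuclideanSpace ℝ (Fin n))) : ℝ :=
  sSup {d : ℝ | ∃ x ∈ W, x ≠ 0 ∧ d = distToSub x V}

noncomputable def gramVol {n : ℕ} {ι : Type*} [Fintype ι] [DecidableEq ι]
    (v : ι → EuclideanSpace ℝ (Fin n)) : ℝ :=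
  Real.sqrt (Matrix.det (Matrix.of fun i j => (inner ℝ (v i) (v j) : ℝ)))

noncomputable def Theta {n : ℕ} {ι : Type*} [Fintype ι] [DecidableEq ι]
    (v : ι → EuclideanSpace ℝ (Fin n)) : ℝ :=
  gramVol v / ∏ i, ‖v i‖

def IsIntPt {n : ℕ} (x : EuclideanSpace ℝ (Fin n)) : Prop := ∀ i, ∃ k : ℤ, x i = (k : ℝ)

noncomputable def toE {n : ℕ} (x : Fin n → ℤ) : EuclideanSpace ℝ (Fin n) :=
  (WithLp.equiv 2 (Fin n → ℝ)).symm (fun i => (x i : ℝ))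

/-!
Rescaling the vectors does not change `Θ`, so we may replace every `v j` and `x j` by a unit
vector, choosing the sign of `x j` so that `⟪x j, v j⟫ ≥ 0`; then `‖x j - v j‖ ≤ 2 δ`. For unit
vectors `Θ` is the Gram volume `√det (⟪w i, w j⟫)`, which factors as the norm of the component of
`w j` orthogonal to the other vectors times their Gram volume. By Hadamard's inequality the latter
is at most `1`, so the Gram volume is `1`-Lipschitz in each argument on families of unit vectors.
Changing the `m` vectors one at a time gives `|Θ x - Θ v| ≤ 2 m δ < Θ v`, hence `Θ x > 0` and `x`
is linearly independent.
-/

open Matrix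
open scoped RealInnerProductSpace

theorem Matrix.det_updateRow_last_single {R : Type*} [CommRing R] {M : ℕ}
    (A : Matrix (Fin (M + 1)) (Fin (M + 1)) R) (r : R) :
    (A.updateRow (Fin.last M) (Pi.single (Fin.last M) r)).det
      = r * (A.submatrix Fin.castSucc Fin.castSucc).det := by
  rw [det_succ_row _ (Fin.last M), Finset.sum_eq_single (Fin.last M)]
  · simp [← Fin.succAbove_last]
  · intro j _ hj
    simp [hj]
  · simp

theorem Matrix.det_updateRow_last_add_sum_smul {R : Type*} [CommRing R] {M : ℕ}
    (A : Matrix (Fin (M + 1)) (Fin (M + 1)) R) (r : Fin (M + 1) → R) (c : Fin M → R) :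
    (A.updateRow (Fin.last M) (r + ∑ k, c k • A k.castSucc)).det
      = (A.updateRow (Fin.last M) r).det := by
  have h := det_updateRow_sum A (Fin.last M) (Fin.snoc c 0)
  simp only [Fin.sum_univ_castSucc, Fin.snoc_castSucc, Fin.snoc_last, zero_smul, add_zero] at h
  rw [det_updateRow_add, h, add_zero]

section InnerProductSpace

variable {E : Type*} [NormedAddCommGroup E] [InnerProductSpace ℝ E] [FiniteDimensional ℝ E]

theorem Matrix.det_gram_snoc {M : ℕ} (w : Fin M → E) (a : E) :
    (gram ℝ (Fin.snoc w a : Fin (M + 1) → E)).det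
      = ‖(Submodule.span ℝ (Set.range w))ᗮ.starProjection a‖ ^ 2 * (gram ℝ w).det := by
  set K := Submodule.span ℝ (Set.range w)
  set p := Kᗮ.starProjection a
  obtain ⟨c, hc⟩ := (Submodule.mem_span_range_iff_exists_fun ℝ).mp (K.starProjection_apply_mem a)
  have ha : a = p + ∑ k, c k • w k := by
    have hpa : p = a - K.starProjection a := K.starProjection_orthogonal_val a
    rw [hc, hpa, sub_add_cancel]
  have hpw : ∀ k, ⟪p, w k⟫ = 0 := fun k =>
    inner_eq_zero_symm.mp (Kᗮ.starProjection_apply_mem a _ (Submodule.subset_span ⟨k, rfl⟩))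
  have hpsnoc : ∀ j, ⟪p, (Fin.snoc w a : Fin (M + 1) → E) j⟫ =
      (Pi.single (Fin.last M) (‖p‖ ^ 2) : Fin (M + 1) → ℝ) j := by
    refine Fin.lastCases ?_ fun k => ?_
    · conv_lhs => rw [Fin.snoc_last, ha]
      simp [inner_add_right, inner_sum, inner_smul_right, hpw]
    · simp [hpw, (Fin.castSucc_lt_last k).ne]
  set G := gram ℝ (Fin.snoc w a : Fin (M + 1) → E)
  have hrow : G (Fin.last M) = Pi.single (Fin.last M) (‖p‖ ^ 2) + ∑ k, c k • G k.castSucc := by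
    ext j
    have hGj : G (Fin.last M) j = ⟪p + ∑ k, c k • w k, (Fin.snoc w a : Fin (M + 1) → E) j⟫ := by
      rw [← ha]; simp [G]
    rw [hGj]
    simp [G, inner_add_left, sum_inner, inner_smul_left, hpsnoc]
  calc G.det = (G.updateRow (Fin.last M) (G (Fin.last M))).det := by rw [updateRow_eq_self]
    _ = ‖p‖ ^ 2 * (gram ℝ w).det := by
      rw [hrow, det_updateRow_last_add_sum_smul, det_updateRow_last_single]
      congr 2
      ext i j
      simp [G]

end InnerProductSpace

section EuclideanSpace

variable {n : ℕ} {ι : Type*} [Fintype ι] [DecidableEq ι]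

theorem gramVol_eq_sqrt_det_gram (w : ι → EuclideanSpace ℝ (Fin n)) :
    gramVol w = √(gram ℝ w).det := rfl

theorem gramVol_comp_equiv {κ : Type*} [Fintype κ] [DecidableEq κ]
    (w : ι → EuclideanSpace ℝ (Fin n)) (e : κ ≃ ι) : gramVol (w ∘ e) = gramVol w := by
  rw [gramVol_eq_sqrt_det_gram, gramVol_eq_sqrt_det_gram, ← det_submatrix_equiv_self e]
  rfl

theorem gramVol_smul (w : ι → EuclideanSpace ℝ (Fin n)) (c : ι → ℝ) :
    gramVol (fun i => c i • w i) = |∏ i, c i| * gramVol w := by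
  have h : gram ℝ (fun i => c i • w i)
      = of fun i j => c i * (of fun i j => c j * gram ℝ w i j) i j := by
    ext i j
    simp only [gram_apply, of_apply, real_inner_smul_left, real_inner_smul_right]
    ring
  rw [gramVol_eq_sqrt_det_gram, gramVol_eq_sqrt_det_gram, h, det_mul_column, det_mul_row,
    ← mul_assoc, ← sq, Real.sqrt_mul (sq_nonneg _), Real.sqrt_sq_eq_abs]

theorem gramVol_snoc {M : ℕ} (w : Fin M → EuclideanSpace ℝ (Fin n))
    (a : EuclideanSpace ℝ (Fin n)) :
    gramVol (Fin.snoc w a : Fin (M + 1) → _)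
      = ‖(Submodule.span ℝ (Set.range w))ᗮ.starProjection a‖ * gramVol w := by
  rw [gramVol_eq_sqrt_det_gram, gramVol_eq_sqrt_det_gram, det_gram_snoc,
    Real.sqrt_mul (sq_nonneg _), Real.sqrt_sq (norm_nonneg _)]

theorem gramVol_nonneg (w : ι → EuclideanSpace ℝ (Fin n)) : 0 ≤ gramVol w := Real.sqrt_nonneg _

theorem gramVol_le_prod_norm : ∀ {M : ℕ} (w : Fin M → EuclideanSpace ℝ (Fin n)),
    gramVol w ≤ ∏ i, ‖w i‖
  | 0, w => by simp [gramVol_eq_sqrt_det_gram]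
  | M + 1, w => by
    rw [← Fin.snoc_init_self w, gramVol_snoc, Fin.prod_univ_castSucc, mul_comm]
    simp only [Fin.snoc_castSucc, Fin.snoc_last]
    exact mul_le_mul (gramVol_le_prod_norm _) (Submodule.norm_starProjection_apply_le _ _)
      (norm_nonneg _) (Finset.prod_nonneg fun _ _ => norm_nonneg _)

theorem abs_gramVol_snoc_sub_le {M : ℕ} (w : Fin M → EuclideanSpace ℝ (Fin n))
    (a b : EuclideanSpace ℝ (Fin n)) :
    |gramVol (Fin.snoc w a : Fin (M + 1) → _) - gramVol (Fin.snoc w b : Fin (M + 1) → _)|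
      ≤ ‖a - b‖ * gramVol w := by
  set P := (Submodule.span ℝ (Set.range w))ᗮ.starProjection
  rw [gramVol_snoc, gramVol_snoc, ← sub_mul, abs_mul, abs_of_nonneg (gramVol_nonneg w)]
  refine mul_le_mul_of_nonneg_right ?_ (gramVol_nonneg w)
  calc |‖P a‖ - ‖P b‖| ≤ ‖P a - P b‖ := abs_norm_sub_norm_le _ _
    _ = ‖P (a - b)‖ := by rw [map_sub]
    _ ≤ ‖a - b‖ := Submodule.norm_starProjection_apply_le _ _

theorem abs_gramVol_update_sub_le (w : ι → EuclideanSpace ℝ (Fin n)) (j : ι)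
    (a b : EuclideanSpace ℝ (Fin n)) (hw : ∀ i ≠ j, ‖w i‖ ≤ 1) :
    |gramVol (Function.update w j a) - gramVol (Function.update w j b)| ≤ ‖a - b‖ := by
  have : Nonempty ι := ⟨j⟩
  obtain ⟨M, hM⟩ := Nat.exists_eq_succ_of_ne_zero (Fintype.card_ne_zero (α := ι))
  set e₀ : ι ≃ Fin (M + 1) := (Fintype.equivFin ι).trans (finCongr hM)
  set e : ι ≃ Fin (M + 1) := e₀.trans (Equiv.swap (e₀ j) (Fin.last M))
  have hej : e j = Fin.last M := by simp [e]
  have hupdate : ∀ z, Function.update w j z ∘ e.symm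
      = Fin.snoc (fun i : Fin M => w (e.symm i.castSucc)) z := by
    intro z
    ext1 i
    induction i using Fin.lastCases with
    | last => simp [e.symm_apply_eq.mpr hej.symm]
    | cast i => simp [e.symm_apply_eq, hej, (Fin.castSucc_lt_last i).ne]
  rw [← gramVol_comp_equiv _ e.symm, ← gramVol_comp_equiv (Function.update w j b) e.symm,
    hupdate, hupdate]
  refine (abs_gramVol_snoc_sub_le _ a b).trans (mul_le_of_le_one_right (norm_nonneg _) ?_)
  refine (gramVol_le_prod_norm _).trans (Finset.prod_le_one (fun _ _ => norm_nonneg _) ?_)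
  intro i _
  refine hw _ fun h => (Fin.castSucc_lt_last i).ne ?_
  rw [← hej, ← h, Equiv.apply_symm_apply]

theorem abs_gramVol_sub_le_sum_norm_sub (u y : ι → EuclideanSpace ℝ (Fin n))
    (hu : ∀ i, ‖u i‖ ≤ 1) (hy : ∀ i, ‖y i‖ ≤ 1) :
    |gramVol y - gramVol u| ≤ ∑ i, ‖y i - u i‖ := by
  suffices h : ∀ s : Finset ι, |gramVol (s.piecewise y u) - gramVol u| ≤ ∑ i ∈ s, ‖y i - u i‖ by
    simpa using h Finset.univ
  intro s
  induction s using Finset.induction_on with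
  | empty => simp
  | insert j s hj ih =>
    have hle : ∀ i ≠ j, ‖s.piecewise y u i‖ ≤ 1 := fun i _ => by
      by_cases hi : i ∈ s <;> simp [hi, hu, hy]
    have hmid : s.piecewise y u = Function.update (s.piecewise y u) j (u j) := by
      rw [eq_comm, Function.update_eq_self_iff, Finset.piecewise_eq_of_notMem _ _ _ hj]
    rw [Finset.piecewise_insert, Finset.sum_insert hj]
    calc _ ≤ |gramVol (Function.update (s.piecewise y u) j (y j))
            - gramVol (Function.update (s.piecewise y u) j (u j))|
          + |gramVol (s.piecewise y u) - gramVol u| := by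
          rw [← hmid]; exact abs_sub_le _ _ _
      _ ≤ ‖y j - u j‖ + ∑ i ∈ s, ‖y i - u i‖ :=
          add_le_add (abs_gramVol_update_sub_le _ j _ _ hle) ih

theorem Theta_smul (w : ι → EuclideanSpace ℝ (Fin n)) {c : ι → ℝ} (hc : ∀ i, c i ≠ 0) :
    Theta (fun i => c i • w i) = Theta w := by
  have hc' : |∏ i, c i| ≠ 0 := abs_ne_zero.mpr (Finset.prod_ne_zero_iff.mpr fun i _ => hc i)
  simp only [Theta, gramVol_smul, norm_smul, Finset.prod_mul_distrib, Real.norm_eq_abs,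
    ← Finset.abs_prod]
  exact mul_div_mul_left _ _ hc'

theorem Theta_of_norm_eq_one {w : ι → EuclideanSpace ℝ (Fin n)} (hw : ∀ i, ‖w i‖ = 1) :
    Theta w = gramVol w := by
  simp [Theta, hw]

theorem linearIndependent_of_Theta_pos {w : ι → EuclideanSpace ℝ (Fin n)} (hw : 0 < Theta w) :
    LinearIndependent ℝ w := by
  have hvol : 0 < gramVol w := by
    by_contra h
    rw [Theta, le_antisymm (not_lt.mp h) (gramVol_nonneg w), zero_div] at hw
    exact hw.false
  exact linearIndependent_of_det_gram_ne_zero (Real.sqrt_pos.mp hvol).ne'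

end EuclideanSpace

section projDist

variable {n : ℕ}

theorem projDist_comm (x y : EuclideanSpace ℝ (Fin n)) : projDist x y = projDist y x := by
  simp only [projDist, mul_comm, real_inner_comm]

theorem projDist_smul_left {c : ℝ} (hc : c ≠ 0) (x y : EuclideanSpace ℝ (Fin n)) :
    projDist (c • x) y = projDist x y := by
  have h : ‖c • x‖ ^ 2 * ‖y‖ ^ 2 - ⟪c • x, y⟫ ^ 2
      = |c| ^ 2 * (‖x‖ ^ 2 * ‖y‖ ^ 2 - ⟪x, y⟫ ^ 2) := by
    rw [norm_smul, real_inner_smul_left, Real.norm_eq_abs, mul_pow, sq_abs]; ring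
  rw [projDist, projDist, h, Real.sqrt_mul (sq_nonneg _), Real.sqrt_sq (abs_nonneg c), norm_smul,
    Real.norm_eq_abs, mul_assoc, mul_div_mul_left _ _ (abs_ne_zero.mpr hc)]

theorem projDist_smul_right {c : ℝ} (hc : c ≠ 0) (x y : EuclideanSpace ℝ (Fin n)) :
    projDist x (c • y) = projDist x y := by
  rw [projDist_comm, projDist_smul_left hc, projDist_comm]

theorem norm_sub_le_two_mul_projDist {a b : EuclideanSpace ℝ (Fin n)} (ha : ‖a‖ = 1)
    (hb : ‖b‖ = 1) (hab : 0 ≤ ⟪a, b⟫) : ‖a - b‖ ≤ 2 * projDist a b := by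
  have hab' : ⟪a, b⟫ ≤ 1 := (real_inner_le_norm a b).trans (by simp [ha, hb])
  rw [projDist, ha, hb]
  simp only [one_pow, mul_one, div_one]
  rw [← div_le_iff₀' two_pos]
  apply Real.le_sqrt_of_sq_le
  rw [div_pow, norm_sub_sq_real, ha, hb]
  nlinarith

theorem exists_smul_norm_sub_le_two_mul_projDist {x b : EuclideanSpace ℝ (Fin n)} (hx : x ≠ 0)
    (hb : ‖b‖ = 1) : ∃ c : ℝ, c ≠ 0 ∧ ‖c • x‖ = 1 ∧ ‖c • x - b‖ ≤ 2 * projDist x b := by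
  obtain ⟨ε, hε, hεx⟩ : ∃ ε : ℝ, |ε| = 1 ∧ 0 ≤ ε * ⟪x, b⟫ := by
    rcases le_total 0 ⟪x, b⟫ with h | h
    exacts [⟨1, abs_one, by simpa⟩, ⟨-1, by simp, by simpa⟩]
  have hx' : ‖x‖ ≠ 0 := norm_ne_zero_iff.mpr hx
  have hc : ε * ‖x‖⁻¹ ≠ 0 := mul_ne_zero (by rintro rfl; simp at hε) (inv_ne_zero hx')
  have hnorm : ‖(ε * ‖x‖⁻¹) • x‖ = 1 := by
    rw [norm_smul, norm_mul, Real.norm_eq_abs, hε, norm_inv, norm_norm, one_mul,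
      inv_mul_cancel₀ hx']
  refine ⟨_, hc, hnorm, ?_⟩
  rw [← projDist_smul_left hc]
  refine norm_sub_le_two_mul_projDist hnorm hb ?_
  rw [real_inner_smul_left, mul_right_comm]
  exact mul_nonneg hεx (inv_nonneg.mpr (norm_nonneg x))

end projDist

theorem stmt6_general {m n : ℕ} (hm : 1 ≤ m)
    (v : Fin m → EuclideanSpace ℝ (Fin n)) (hv : LinearIndependent ℝ v)
    (δ : ℝ) (hδ : δ < Theta v / (2 * m))
    (x : Fin m → EuclideanSpace ℝ (Fin n)) (hx : ∀ j, x j ≠ 0)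
    (hdx : ∀ j, projDist (x j) (v j) ≤ δ) :
    LinearIndependent ℝ x ∧ |Theta x - Theta v| ≤ 2 * m * δ := by
  have hv0 : ∀ j, ‖v j‖⁻¹ ≠ 0 := fun j => inv_ne_zero (norm_ne_zero_iff.mpr (hv.ne_zero j))
  set u := fun j => ‖v j‖⁻¹ • v j
  have hu : ∀ j, ‖u j‖ = 1 := fun j => norm_smul_inv_norm (hv.ne_zero j)
  choose c hc0 hcx hcu using fun j => exists_smul_norm_sub_le_two_mul_projDist (hx j) (hu j)
  have hΘv : Theta v = gramVol u := by rw [← Theta_smul v hv0, Theta_of_norm_eq_one hu]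
  have hΘx : Theta x = gramVol fun j => c j • x j := by
    rw [← Theta_smul x hc0, Theta_of_norm_eq_one hcx]
  have hΘ : |Theta x - Theta v| ≤ 2 * m * δ := by
    rw [hΘx, hΘv]
    calc _ ≤ ∑ j, ‖c j • x j - u j‖ :=
          abs_gramVol_sub_le_sum_norm_sub _ _ (fun j => (hu j).le) (fun j => (hcx j).le)
      _ ≤ ∑ _j : Fin m, 2 * δ := Finset.sum_le_sum fun j _ =>
          (hcu j).trans (by rw [projDist_smul_right (hv0 j)]; linarith [hdx j])
      _ = 2 * m * δ := by
          rw [Finset.sum_const, Finset.card_univ, Fintype.card_fin, nsmul_eq_mul]; ring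
  have hδΘ : 2 * m * δ < Theta v := by
    rwa [lt_div_iff₀' (mul_pos two_pos (Nat.cast_pos.mpr hm))] at hδ
  exact ⟨linearIndependent_of_Theta_pos (by linarith [abs_le.mp hΘ]), hΘ⟩

theorem stmt6 {m n : ℕ} (hm : 1 ≤ m) (hmn : m ≤ n)
    (v : Fin m → EuclideanSpace ℝ (Fin n)) (hv : LinearIndependent ℝ v)
    (δ : ℝ) (hδ0 : 0 ≤ δ) (hδ : δ < Theta v / (2 * m))
    (x : Fin m → EuclideanSpace ℝ (Fin n)) (hx : ∀ j, x j ≠ 0)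
    (hdx : ∀ j, projDist (x j) (v j) ≤ δ) :
    LinearIndependent ℝ x ∧ |Theta x - Theta v| ≤ 2 * m * δ :=
  stmt6_general hm v hv δ hδ x hx hdx
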